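/- The map F is strictly monotone on 𝔾: for all C, C̃ ∈ 𝔾 with C ≠ C̃, one has (F(C) − F(C̃)) · (C − C̃) > 0, where · denotes the Euclidean inner product on ℝ^n. -/

import Mathlib

open MeasureTheory Set
open scoped Classical

/-- `f_j^{(C)}(t) = C_j - (t - x_j)^2`. -/
noncomputable def fj (n : ℕ) (x C : Fin n → ℝ) (j : Fin n) (t : ℝ) : ℝ :=
  C j - (t - x j) ^ 2

/-- `f^{(C)}(t) = max{f_1^{(C)}(t), …, f_n^{(C)}(t), 0}`. -/
noncomputable def fmax (n : ℕ) (x C : Fin n → ℝ) (t : ℝ) : ℝ :=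
  max (⨆ j : Fin n, fj n x C j t) 0

/-- `E_j^{(C)} = {t : f_j^{(C)}(t) = f^{(C)}(t)}`. -/
def Ej (n : ℕ) (x C : Fin n → ℝ) (j : Fin n) : Set ℝ :=
  {t | fj n x C j t = fmax n x C t}

/-- `F_j(C) = ∫_{E_j^{(C)}} f^{(C)}` if `E_j^{(C)} ≠ ∅`, else `0`. -/
noncomputable def Fj (n : ℕ) (x C : Fin n → ℝ) (j : Fin n) : ℝ :=
  if (Ej n x C j).Nonempty then ∫ t in Ej n x C j, fmax n x C t else 0

/-- `F(C) = (F_1(C), …, F_n(C))`. -/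
noncomputable def Fvec (n : ℕ) (x C : Fin n → ℝ) : Fin n → ℝ :=
  fun j => Fj n x C j

/-- `𝔾 = {C : F_j(C) > 0 for all j}`. -/
def Gset (n : ℕ) (x : Fin n → ℝ) : Set (Fin n → ℝ) :=
  {C | ∀ j, 0 < Fj n x C j}

/-- `γ_{ij}(C) = (C_i - C_j)/(2(x_j - x_i)) + (x_i + x_j)/2`. -/
noncomputable def gam (n : ℕ) (x C : Fin n → ℝ) (i j : Fin n) : ℝ :=
  (C i - C j) / (2 * (x j - x i)) + (x i + x j) / 2

/-!
Write `g = f^{(C)}` and `g' = f^{(C')}`. On `E_j^{(C)}` we have `g = f_j^{(C)}` and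
`g' ≥ f_j^{(C')}`, hence `g - g' ≤ C_j - C'_j`. Multiplying by `g ≥ 0` and integrating over
the sets `E_j^{(C)}`, which cover the support of `g` and pairwise meet in at most one point,
gives `∫ g (g - g') ≤ ∑ F_j(C) (C_j - C'_j)`. Adding the same inequality with `C` and `C'`
exchanged, `∫ (g - g')² ≤ (F(C) - F(C')) · (C - C')`. The left side is positive unless
`g = g'`, and `g = g'` forces `C = C'` once every `F_j(C)` is positive: `E_j^{(C)} ∩ {g > 0}`
then has positive measure, so on two of its points `f_j^{(C)}` agrees with a single
`f_k^{(C')}`, and two parabolas `t ↦ c - (t - p)²` that agree at two points coincide.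
-/

theorem eq_and_eq_of_sub_sq_eq_sub_sq {R : Type*} [CommRing R] [IsDomain R] [NeZero (2 : R)]
    {a b p q c d : R} (hab : a ≠ b)
    (ha : c - (a - p) ^ 2 = d - (a - q) ^ 2) (hb : c - (b - p) ^ 2 = d - (b - q) ^ 2) :
    p = q ∧ c = d := by
  have hpq : 2 * ((a - b) * (p - q)) = 0 := by linear_combination ha - hb
  obtain rfl : p = q := by
    rcases mul_eq_zero.mp ((mul_eq_zero.mp hpq).resolve_left two_ne_zero) with h | h
    · exact absurd (sub_eq_zero.mp h) hab
    · exact sub_eq_zero.mp h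
  exact ⟨rfl, by linear_combination ha⟩

section
variable {n : ℕ} {x C C' : Fin n → ℝ}

theorem fmax_nonneg (t : ℝ) : 0 ≤ fmax n x C t := le_max_right _ _

theorem fj_le_fmax (j : Fin n) (t : ℝ) : fj n x C j t ≤ fmax n x C t :=
  (le_ciSup (f := fun k => fj n x C k t) (Set.finite_range _).bddAbove j).trans (le_max_left _ _)

theorem sub_fmax_le_of_mem_Ej {j : Fin n} {t : ℝ} (ht : t ∈ Ej n x C j) :
    fmax n x C t - fmax n x C' t ≤ C j - C' j := by
  have h := fj_le_fmax (x := x) (C := C') j t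
  rw [← ht]
  unfold fj at *
  linarith

theorem Fj_eq_setIntegral (j : Fin n) : Fj n x C j = ∫ t in Ej n x C j, fmax n x C t := by
  unfold Fj
  split_ifs with h
  · rfl
  · rw [not_nonempty_iff_eq_empty.mp h, Measure.restrict_empty, integral_zero_measure]

theorem Ej_inter_subsingleton (hx : Function.Injective x) {j k : Fin n} (hjk : j ≠ k) :
    (Ej n x C j ∩ Ej n x C k).Subsingleton := by
  rintro a ⟨haj, hak⟩ b ⟨hbj, hbk⟩
  by_contra hab
  exact hjk (hx (eq_and_eq_of_sub_sq_eq_sub_sq hab (haj.trans hak.symm) (hbj.trans hbk.symm)).1)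

theorem pairwise_aedisjoint_Ej (hx : Function.Injective x) :
    Pairwise (Function.onFun (AEDisjoint volume) (Ej n x C)) :=
  fun _ _ hjk => (Ej_inter_subsingleton hx hjk).finite.measure_zero _

variable [Nonempty (Fin n)]

theorem continuous_fmax : Continuous (fmax n x C) := by
  have hsup : (fun t => ⨆ j, fj n x C j t) =
      fun t => Finset.univ.sup' Finset.univ_nonempty (fun j => fj n x C j t) := by
    ext t
    exact (Finset.sup'_univ_eq_ciSup _).symm
  have hcont : Continuous fun t => ⨆ j, fj n x C j t := by
    rw [hsup]
    exact Continuous.finset_sup'_apply _ fun j _ => by unfold fj; fun_prop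
  exact hcont.max continuous_const

theorem hasCompactSupport_fmax : HasCompactSupport (fmax n x C) := by
  refine HasCompactSupport.intro
    (isCompact_iUnion fun j => isCompact_closedBall (x j) √|C j|) fun t ht => ?_
  refine max_eq_right (ciSup_le fun j => ?_)
  have hfar : √|C j| < |t - x j| := by
    simpa [Real.dist_eq] using fun h => ht (mem_iUnion.mpr ⟨j, h⟩)
  have h := (Real.sqrt_lt' ((Real.sqrt_nonneg _).trans_lt hfar)).mp hfar
  rw [sq_abs] at h
  unfold fj
  linarith [le_abs_self (C j)]

theorem exists_mem_Ej_of_fmax_pos {t : ℝ} (ht : 0 < fmax n x C t) : ∃ j, t ∈ Ej n x C j := by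
  obtain ⟨j, -, hj⟩ :=
    Finset.exists_max_image Finset.univ (fun j => fj n x C j t) Finset.univ_nonempty
  have hsup : (⨆ k, fj n x C k t) = fj n x C j t :=
    le_antisymm (ciSup_le fun k => hj k (Finset.mem_univ k))
      (le_ciSup (f := fun k => fj n x C k t) (Set.finite_range _).bddAbove j)
  have hfmax : fmax n x C t = max (fj n x C j t) 0 := by rw [fmax, hsup]
  rw [hfmax] at ht
  have hj_pos : 0 < fj n x C j t := (lt_max_iff.mp ht).resolve_right (lt_irrefl 0)
  exact ⟨j, (hfmax.trans (max_eq_left hj_pos.le)).symm⟩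

theorem integrable_fmax : Integrable (fmax n x C) :=
  continuous_fmax.integrable_of_hasCompactSupport hasCompactSupport_fmax

theorem integrable_fmax_mul_sub_fmax (C C' : Fin n → ℝ) :
    Integrable fun t => fmax n x C t * (fmax n x C t - fmax n x C' t) :=
  (continuous_fmax.mul (continuous_fmax.sub continuous_fmax)).integrable_of_hasCompactSupport
    hasCompactSupport_fmax.mul_right

theorem measurableSet_Ej (j : Fin n) : MeasurableSet (Ej n x C j) :=
  (isClosed_eq (by unfold fj; fun_prop) continuous_fmax).measurableSet

theorem sum_setIntegral_Ej (hx : Function.Injective x) {h : ℝ → ℝ} (hh : Integrable h)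
    (hvanish : ∀ t, fmax n x C t = 0 → h t = 0) :
    ∑ j, ∫ t in Ej n x C j, h t = ∫ t, h t := by
  have hunion := integral_iUnion_ae
    (fun j => (measurableSet_Ej (x := x) (C := C) j).nullMeasurableSet)
    (pairwise_aedisjoint_Ej hx) hh.integrableOn
  rw [tsum_fintype] at hunion
  rw [← hunion]
  refine setIntegral_eq_integral_of_forall_compl_eq_zero fun t ht => hvanish t ?_
  by_contra hne
  obtain ⟨j, hj⟩ := exists_mem_Ej_of_fmax_pos ((fmax_nonneg t).lt_of_ne' hne)
  exact ht (mem_iUnion.mpr ⟨j, hj⟩)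

theorem integral_fmax_mul_sub_le (hx : Function.Injective x) (C C' : Fin n → ℝ) :
    ∫ t, fmax n x C t * (fmax n x C t - fmax n x C' t) ≤ ∑ j, Fj n x C j * (C j - C' j) := by
  have hint := integrable_fmax_mul_sub_fmax (x := x) C C'
  rw [← sum_setIntegral_Ej (C := C) hx hint fun t h0 => by simp [h0]]
  refine Finset.sum_le_sum fun j _ => ?_
  rw [Fj_eq_setIntegral, ← integral_mul_const]
  refine setIntegral_mono_on hint.integrableOn (integrable_fmax.integrableOn.mul_const _)
    (measurableSet_Ej j) fun t ht => ?_
  exact mul_le_mul_of_nonneg_left (sub_fmax_le_of_mem_Ej ht) (fmax_nonneg t)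

theorem integral_sq_sub_fmax_le (hx : Function.Injective x) (C C' : Fin n → ℝ) :
    ∫ t, (fmax n x C t - fmax n x C' t) ^ 2 ≤
      ∑ j, (Fj n x C j - Fj n x C' j) * (C j - C' j) := by
  calc ∫ t, (fmax n x C t - fmax n x C' t) ^ 2
      = (∫ t, fmax n x C t * (fmax n x C t - fmax n x C' t)) +
          ∫ t, fmax n x C' t * (fmax n x C' t - fmax n x C t) := by
        rw [← integral_add (integrable_fmax_mul_sub_fmax C C')
          (integrable_fmax_mul_sub_fmax C' C)]
        congr 1 with t
        ring
    _ ≤ ∑ j, Fj n x C j * (C j - C' j) + ∑ j, Fj n x C' j * (C' j - C j) :=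
        add_le_add (integral_fmax_mul_sub_le hx C C') (integral_fmax_mul_sub_le hx C' C)
    _ = ∑ j, (Fj n x C j - Fj n x C' j) * (C j - C' j) := by
        rw [← Finset.sum_add_distrib]
        congr 1 with j
        ring

theorem eq_of_fmax_eq (hx : Function.Injective x) (hC : C ∈ Gset n x)
    (h : fmax n x C = fmax n x C') : C = C' := by
  funext j
  set S := Function.support (fmax n x C) ∩ Ej n x C j
  have hS : 0 < volume S := by
    have hpos := hC j
    rwa [Fj_eq_setIntegral, setIntegral_pos_iff_support_of_nonneg_ae
      (Filter.Eventually.of_forall fmax_nonneg) integrable_fmax.integrableOn] at hpos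
  obtain ⟨k, hk⟩ : ∃ k, (S ∩ Ej n x C' k).Nontrivial := by
    by_contra! hsub
    refine hS.ne' (Set.Finite.measure_zero ?_ _)
    refine (finite_iUnion fun k => (hsub k).finite).subset fun t ht => ?_
    have hpos : 0 < fmax n x C' t := h ▸ (fmax_nonneg t).lt_of_ne' ht.1
    obtain ⟨k, hk⟩ := exists_mem_Ej_of_fmax_pos hpos
    exact mem_iUnion.mpr ⟨k, ht, hk⟩
  obtain ⟨a, ⟨⟨-, haj⟩, hak⟩, b, ⟨⟨-, hbj⟩, hbk⟩, hab⟩ := hk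
  have hjk := eq_and_eq_of_sub_sq_eq_sub_sq hab (haj.trans (congrFun h a ▸ hak.symm))
    (hbj.trans (congrFun h b ▸ hbk.symm))
  obtain rfl := hx hjk.1
  exact hjk.2

theorem integral_sq_sub_fmax_pos (hx : Function.Injective x) (hC : C ∈ Gset n x)
    (hne : C ≠ C') :
    0 < ∫ t, (fmax n x C t - fmax n x C' t) ^ 2 := by
  obtain ⟨t, ht⟩ := Function.ne_iff.mp fun h => hne (eq_of_fmax_eq hx hC h)
  exact Continuous.integral_pos_of_hasCompactSupport_nonneg_nonzero
    ((continuous_fmax.sub continuous_fmax).pow 2)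
    ((hasCompactSupport_fmax.sub hasCompactSupport_fmax).comp_left (g := fun s => s ^ 2)
      (zero_pow two_ne_zero))
    (fun t => sq_nonneg _) (pow_ne_zero 2 (sub_ne_zero.mpr ht))

end

theorem stmt_18_general (n : ℕ) (x : Fin n → ℝ) (hx : StrictMono x) :
    ∀ C ∈ Gset n x, ∀ C' ∈ Gset n x, C ≠ C' →
      0 < ∑ j, (Fj n x C j - Fj n x C' j) * (C j - C' j) := by
  intro C hC C' _ hne
  obtain ⟨j, -⟩ := Function.ne_iff.mp hne
  have : Nonempty (Fin n) := ⟨j⟩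
  exact (integral_sq_sub_fmax_pos hx.injective hC hne).trans_le
    (integral_sq_sub_fmax_le hx.injective C C')

/-- `F` is strictly monotone on `𝔾`:
`(F(C) - F(C̃)) · (C - C̃) > 0` for all distinct `C, C̃ ∈ 𝔾`. -/
theorem stmt_18 (n : ℕ) (hn : 1 ≤ n) (x : Fin n → ℝ) (hx : StrictMono x) :
    ∀ C ∈ Gset n x, ∀ C' ∈ Gset n x, C ≠ C' →
      0 < ∑ j, (Fj n x C j - Fj n x C' j) * (C j - C' j) :=
  stmt_18_general n x hx
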